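/- arXiv:1411.5194 — 5 statements merged into one kernel-verified Lean document; each statement's English description precedes it below -/
import Mathlib

section
/- Let G be an abelian group and k an automorphism of G satisfying k − k² = id (i.e., k(x) − k(k(x)) = x for all x). Define x * y = (x − k(x)) + k(y). Then (G, *) is an idempotent quasigroup satisfying the semi-symmetric law x * (y * x) = y for all x, y. -/
theorem stmt_5 {G : Type*} [AddCommGroup G] (k : G ≃+ G)
    (hk : ∀ x, k x - k (k x) = x) :
    (∀ a, Function.Bijective (fun y : G => (a - k a) + k y)) ∧
    (∀ a, Function.Bijective (fun x : G => (x - k x) + k a)) ∧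
    (∀ x : G, (x - k x) + k x = x) ∧
    (∀ x y : G, (x - k x) + k ((y - k y) + k x) = y) := by
  have hsym : ∀ x : G, x - k x = k.symm x := by
    intro x
    have := hk (k.symm x)
    simpa using this
  refine ⟨?_, ?_, ?_, ?_⟩
  · intro a
    exact ((k.toEquiv).trans (Equiv.addLeft (a - k a))).bijective
  · intro a
    have : (fun x : G => (x - k x) + k a) = fun x => k.symm x + k a := by
      funext x; rw [hsym]
    rw [this]
    exact ((k.symm.toEquiv).trans (Equiv.addRight (k a))).bijective
  · intro x; abel
  · intro x y
    have h1 := hk x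
    have h2 := hk y
    simp only [map_add, map_sub]
    -- goal: x - k x + (k y - k (k y) + k (k x)) = y
    calc x - k x + (k y - k (k y) + k (k x)) = (k y - k (k y)) + (x - (k x - k (k x))) := by abel
    _ = y := by rw [h1, h2]; abel
end

section
/- Let G be an abelian group and k an automorphism of G such that the map x ↦ x − k(x) is also an automorphism, and suppose the quasigroup Aff(G,k) with operation x * y = (x − k(x)) + k(y) is semi-symmetric and idempotent (a Mendelsohn quasigroup). Then k satisfies k − k² = id. -/
theorem stmt_7 {G : Type*} [AddCommGroup G] (k : G ≃+ G)
    (hIk : Function.Bijective (fun x : G => x - k x))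
    (hsemi : ∀ x y : G, (x - k x) + k ((y - k y) + k x) = y) :
    ∀ x : G, k x - k (k x) = x := by
  intro x
  have h := hsemi x 0
  simp at h
  have : k x - k (k x) = x - (x - k x + k (k x)) := by abel
  rw [this, h, sub_zero]
end

section
/- Let G be an abelian group and k an automorphism of G with I − k an automorphism, such that the operation x * y = (I − k)(x) + k(y) is commutative and totally symmetric (a Steiner quasigroup). Then G has exponent 3 and k = −I. -/
theorem stmt_8 {G : Type*} [AddCommGroup G] (k : G ≃+ G)
    (hIk : Function.Bijective (fun x : G => x - k x))
    (hcomm : ∀ x y : G, (x - k x) + k y = (y - k y) + k x)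
    (hts : ∀ x y : G, (x - k x) + k ((x - k x) + k y) = y) :
    (∀ x : G, x + x + x = 0) ∧ (∀ x : G, k x = -x) := by
  have h1 : ∀ x : G, x - k x = k x := by
    intro x
    have := hcomm x 0
    simpa using this
  have h2 : ∀ x : G, k (k x) = -k x := by
    intro x
    have := hts x 0
    rw [h1 x] at this
    simp at this
    exact eq_neg_of_add_eq_zero_right this
  have hk : ∀ x : G, k x = -x := by
    intro x
    have h := hts x x
    rw [h1 x, map_add, h2 x] at h
    -- h : k x + (-k x + -k x) = x
    have h3 : -k x = x := by
      calc -k x = k x + (-k x + -k x) := by abel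
        _ = x := h
    exact neg_eq_iff_eq_neg.mp h3
  refine ⟨?_, hk⟩
  intro x
  have h := h1 x
  rw [hk x] at h
  -- h : x - (-x) = -x
  have h4 : x + x = -x := by
    calc x + x = x - -x := by abel
      _ = -x := h
  rw [h4]; abel
end

section
/- In a semi-symmetric idempotent quasigroup (Mendelsohn quasigroup), left distributivity and right distributivity are equivalent: every left translation L_x is a homomorphism of the quasigroup operation if and only if every right translation R_x is. -/
theorem stmt_10 {Q : Type*} (op : Q → Q → Q)
    (hl : ∀ a, Function.Bijective (fun y => op a y))
    (hr : ∀ a, Function.Bijective (fun x => op x a))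
    (hidem : ∀ x, op x x = x)
    (hsemi : ∀ x y, op x (op y x) = y) :
    (∀ x y z, op x (op y z) = op (op x y) (op x z)) ↔
    (∀ x y z, op (op x y) z = op (op x z) (op y z)) := by
  have hsemi' : ∀ x y, op (op x y) x = y := by
    intro x y
    have := (hl x).1
    apply this
    show op x (op (op x y) x) = op x y
    exact hsemi x (op x y)
  constructor
  · intro h x y z
    have := (hl z).1
    apply this
    show op z (op (op x y) z) = op z (op (op x z) (op y z))
    rw [hsemi, h, hsemi, hsemi]
  · intro h x y z
    have := (hr x).1
    apply this
    show op (op x (op y z)) x = op (op (op x y) (op x z)) x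
    rw [hsemi', h, hsemi', hsemi']
end

section
/- Let p be a prime with p ≡ 2 (mod 3) and d odd. Then there is no automorphism k of the group (ZMod p)^d satisfying k − k² = id (equivalently, k² − k + 1 = 0 as an endomorphism). -/
/-!
From `k² - k + 1 = 0` we get `k³ = -1`, so `k²` has order dividing `3`. A fixed point `x` of `k²`
satisfies `k x = 2 x`, hence `x = k² x = 4 x` and `3 x = 0`. On a finite group of order prime to `3`
the permutation `k²` therefore fixes only `0`, its other orbits have size `3`, and `|A| ≡ 1 (mod 3)`.
For `A = (ℤ/p)^d` with `p ≡ 2 (mod 3)` and `d` odd, however, `|A| = p^d ≡ 2 (mod 3)`.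
-/

namespace AddMonoidHom

variable {A : Type*} [AddCommGroup A] {k : A →+ A}

lemma apply_apply_apply_eq_neg (hk : ∀ x, k (k x) - k x + x = 0) (x : A) :
    k (k (k x)) = -x := by
  have hkk : ∀ y, k (k y) = k y - y := fun y => by linear_combination (norm := module) hk y
  rw [hkk (k x), hkk x]
  abel

lemma three_nsmul_eq_zero_of_apply_apply_eq_self (hk : ∀ x, k (k x) - k x + x = 0) {x : A}
    (hx : k (k x) = x) : 3 • x = 0 := by
  have hkx : k x = 2 • x := by linear_combination (norm := module) hx - hk x
  have h4 : k (k x) = 4 • x := by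
    rw [hkx, map_nsmul, hkx, ← mul_nsmul]
  linear_combination (norm := module) hx - h4

theorem card_modEq_one_of_apply_apply_sub_apply_add_eq_zero [Finite A]
    (hA : (Nat.card A).Coprime 3) (hk : ∀ x, k (k x) - k x + x = 0) :
    Nat.card A ≡ 1 [MOD 3] := by
  classical
  have := Fintype.ofFinite A
  have : Fact (Nat.Prime 3) := ⟨Nat.prime_three⟩
  let f : Function.End A := k ∘ k
  have hf : f ^ 3 ^ 1 = 1 := by
    funext x
    change k (k (k (k (k (k x))))) = x
    rw [apply_apply_apply_eq_neg hk, apply_apply_apply_eq_neg hk, neg_neg]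
  have hfix : f.fixedPoints = {0} := by
    refine Set.eq_singleton_iff_unique_mem.2 ⟨by simp [f, Function.IsFixedPt], fun x hx => ?_⟩
    have h3 := three_nsmul_eq_zero_of_apply_apply_eq_self hk hx
    exact hA.nsmul_right_bijective.injective (h3.trans (nsmul_zero 3).symm)
  have hcard : Fintype.card f.fixedPoints = 1 := by
    rw [← Nat.card_eq_fintype_card, hfix, Nat.card_unique]
  rw [Nat.card_eq_fintype_card]
  exact hcard ▸ Equiv.Perm.card_fixedPoints_modEq hf

end AddMonoidHom

lemma Nat.pow_modEq_two_of_odd {p d : ℕ} (hp : p ≡ 2 [MOD 3]) (hd : Odd d) :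
    p ^ d ≡ 2 [MOD 3] := by
  obtain ⟨m, rfl⟩ := hd
  calc p ^ (2 * m + 1) ≡ 2 ^ (2 * m + 1) [MOD 3] := hp.pow _
    _ = 2 * 4 ^ m := by rw [pow_succ, pow_mul, mul_comm]; norm_num
    _ ≡ 2 * 1 ^ m [MOD 3] := (Nat.ModEq.refl 2).mul ((show 4 ≡ 1 [MOD 3] by decide).pow m)
    _ = 2 := by simp

theorem stmt_13_general (p : ℕ) (hp3 : p % 3 = 2) (d : ℕ) (hd : Odd d) :
    ¬∃ k : (Fin d → ZMod p) ≃+ (Fin d → ZMod p),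
      ∀ x, k (k x) - k x + x = 0 := by
  rintro ⟨k, hk⟩
  have : NeZero p := ⟨by omega⟩
  have hcard : Nat.card (Fin d → ZMod p) = p ^ d := by simp
  have hmod2 : p ^ d ≡ 2 [MOD 3] := Nat.pow_modEq_two_of_odd hp3 hd
  have hcop : (p ^ d).Coprime 3 :=
    (Nat.coprime_comm.1 <| (Nat.Prime.coprime_iff_not_dvd Nat.prime_three).2 <| by
      rw [Nat.dvd_iff_mod_eq_zero, hmod2]; decide)
  have hmod1 := AddMonoidHom.card_modEq_one_of_apply_apply_sub_apply_add_eq_zero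
    (k := k.toAddMonoidHom) (hcard ▸ hcop) hk
  rw [hcard] at hmod1
  exact absurd (hmod1.symm.trans hmod2) (by decide)

theorem stmt_13 (p : ℕ) (hp : p.Prime) (hp3 : p % 3 = 2) (d : ℕ) (hd : Odd d) :
    ¬∃ k : (Fin d → ZMod p) ≃+ (Fin d → ZMod p),
      ∀ x, k (k x) - k x + x = 0 :=
  stmt_13_general p hp3 d hd
end
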